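/- Let B ⊆ ℝ^(n+1) be compact strictly convex with non-empty interior, and let v₁,…,v_{n+1} be an orthonormal basis such that B is regular with respect to it, has no special corners with respect to it, and the medians M_i := M_{v_i} are defined for each i. If x ∈ ⋂_{i=1}^{n+1} M_i lies in the interior of B, then there exist 2(n+1) points x_i^± ∈ ∂B with x = (x_i^+ + x_i^-)/2 and p_i(x_i^+) = p_i(x_i^-) for each i; these points are the vertices of an (n+1)-rhomb with direction {v₁,…,v_{n+1}} inscribed in ∂B. -/

import Mathlib

open Metric Set
open scoped RealInnerProductSpace

/-- Orthogonal projection of `ℝ^{n+1}` onto the hyperplane orthogonal to `v`. -/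
noncomputable def pv {n : ℕ} (v : EuclideanSpace ℝ (Fin (n + 1))) :
    EuclideanSpace ℝ (Fin (n + 1)) →L[ℝ] ↥((ℝ ∙ v)ᗮ) :=
  Submodule.orthogonalProjectionOnto (ℝ ∙ v)ᗮ

/-- `B` is strictly convex: every open segment between two distinct points of `B`
lies in the interior of `B`. -/
def StrictlyConvexSet {V : Type*} [AddCommGroup V] [Module ℝ V] [TopologicalSpace V]
    (B : Set V) : Prop :=
  ∀ x ∈ B, ∀ y ∈ B, x ≠ y → openSegment ℝ x y ⊆ interior B

/-- Points of `B` projecting to the boundary of `p_v(B)`. -/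
def D0 {n : ℕ} (B : Set (EuclideanSpace ℝ (Fin (n + 1)))) (v : EuclideanSpace ℝ (Fin (n + 1))) :
    Set (EuclideanSpace ℝ (Fin (n + 1))) :=
  {x ∈ B | pv v x ∈ frontier (pv v '' B)}

/-- Upper region of `S = ∂B`: points over the interior of `p_v(B)` maximizing `x·v` on the fiber. -/
def Uplus {n : ℕ} (B : Set (EuclideanSpace ℝ (Fin (n + 1)))) (v : EuclideanSpace ℝ (Fin (n + 1))) :
    Set (EuclideanSpace ℝ (Fin (n + 1))) :=
  {x | x ∈ frontier B ∧ pv v x ∈ interior (pv v '' B) ∧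
    ∀ y ∈ B, pv v y = pv v x → ⟪y, v⟫ ≤ ⟪x, v⟫}

/-- Lower region of `S = ∂B`: points over the interior of `p_v(B)` minimizing `x·v` on the fiber. -/
def Uminus {n : ℕ} (B : Set (EuclideanSpace ℝ (Fin (n + 1)))) (v : EuclideanSpace ℝ (Fin (n + 1))) :
    Set (EuclideanSpace ℝ (Fin (n + 1))) :=
  {x | x ∈ frontier B ∧ pv v x ∈ interior (pv v '' B) ∧
    ∀ y ∈ B, pv v y = pv v x → ⟪x, v⟫ ≤ ⟪y, v⟫}

def Dplus {n : ℕ} (B : Set (EuclideanSpace ℝ (Fin (n + 1)))) (v : EuclideanSpace ℝ (Fin (n + 1))) :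
    Set (EuclideanSpace ℝ (Fin (n + 1))) := D0 B v ∪ Uplus B v

def Dminus {n : ℕ} (B : Set (EuclideanSpace ℝ (Fin (n + 1)))) (v : EuclideanSpace ℝ (Fin (n + 1))) :
    Set (EuclideanSpace ℝ (Fin (n + 1))) := D0 B v ∪ Uminus B v

/-- The median of `S` in direction `v`: midpoints of fiber pairs. -/
def median {n : ℕ} (B : Set (EuclideanSpace ℝ (Fin (n + 1)))) (v : EuclideanSpace ℝ (Fin (n + 1))) :
    Set (EuclideanSpace ℝ (Fin (n + 1))) :=
  {z | ∃ xp ∈ Dplus B v, ∃ xm ∈ Dminus B v, pv v xp = pv v xm ∧ z = midpoint ℝ xp xm}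

/-!
The medians are made of midpoints of pairs of boundary points lying on a common line parallel
to `v_i`. If such a midpoint `x` is interior, the two points differ, so they are `x ± λ_i v_i`
with `λ_i ≠ 0`; ordering the pair makes `λ_i > 0`. Doing this for every `i` gives the rhomb.
-/

lemma eq_midpoint_add_smul_of_sub_eq_smul {V : Type*} [AddCommGroup V] [Module ℝ V]
    {a b v : V} {c : ℝ} (h : a - b = c • v) :
    a = midpoint ℝ a b + (c / 2) • v ∧ b = midpoint ℝ a b - (c / 2) • v := by
  have hv : (c / 2) • v = (2 : ℝ)⁻¹ • (a - b) := by rw [h, smul_smul, div_eq_inv_mul]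
  rw [midpoint_eq_smul_add, invOf_eq_inv, hv]
  constructor <;> module

section Median

variable {n : ℕ}

lemma pv_surjective (v : EuclideanSpace ℝ (Fin (n + 1))) : Function.Surjective (pv v) :=
  fun w => ⟨w, Submodule.orthogonalProjectionOnto_mem_subspace_eq_self w⟩

lemma sub_mem_span_singleton_of_pv_eq {v a b : EuclideanSpace ℝ (Fin (n + 1))}
    (hab : pv v a = pv v b) : a - b ∈ ℝ ∙ v := by
  have h : pv v (a - b) = 0 := by rw [map_sub, hab, sub_self]
  simpa only [Submodule.orthogonal_orthogonal] using
    Submodule.orthogonalProjectionOnto_eq_zero_iff.mp h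

/-- Since `p_v` is an open map, a point over the boundary of `p_v(B)` cannot be interior to `B`. -/
lemma D0_subset_frontier (B : Set (EuclideanSpace ℝ (Fin (n + 1))))
    (v : EuclideanSpace ℝ (Fin (n + 1))) : D0 B v ⊆ frontier B := by
  rintro y ⟨hyB, hyf⟩
  refine ⟨subset_closure hyB, fun hyint => hyf.2 ?_⟩
  exact interior_maximal (image_mono interior_subset)
    ((pv v).isOpenMap (pv_surjective v) _ isOpen_interior) ⟨y, hyint, rfl⟩

lemma Dplus_subset_frontier (B : Set (EuclideanSpace ℝ (Fin (n + 1))))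
    (v : EuclideanSpace ℝ (Fin (n + 1))) : Dplus B v ⊆ frontier B :=
  union_subset (D0_subset_frontier B v) fun _ h => h.1

lemma Dminus_subset_frontier (B : Set (EuclideanSpace ℝ (Fin (n + 1))))
    (v : EuclideanSpace ℝ (Fin (n + 1))) : Dminus B v ⊆ frontier B :=
  union_subset (D0_subset_frontier B v) fun _ h => h.1

lemma exists_symmetric_pair_of_mem_median {B : Set (EuclideanSpace ℝ (Fin (n + 1)))}
    {v x : EuclideanSpace ℝ (Fin (n + 1))} (hx : x ∈ median B v) (hxint : x ∈ interior B) :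
    ∃ p q : EuclideanSpace ℝ (Fin (n + 1)), ∃ l : ℝ,
      p ∈ frontier B ∧ q ∈ frontier B ∧ x = midpoint ℝ p q ∧ pv v p = pv v q ∧
        0 < l ∧ p = x + l • v ∧ q = x - l • v := by
  obtain ⟨a, ha, b, hb, hab, rfl⟩ := hx
  have haF := Dplus_subset_frontier B v ha
  have hbF := Dminus_subset_frontier B v hb
  obtain ⟨c, hc⟩ := Submodule.mem_span_singleton.mp (sub_mem_span_singleton_of_pv_eq hab)
  obtain ⟨hpa, hpb⟩ := eq_midpoint_add_smul_of_sub_eq_smul hc.symm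
  have hc0 : c ≠ 0 := by
    rintro rfl
    rw [zero_div, zero_smul, add_zero] at hpa
    exact (hpa ▸ haF).2 hxint
  rcases hc0.lt_or_gt with hneg | hpos
  · refine ⟨b, a, -(c / 2), hbF, haF, midpoint_comm a b, hab.symm, by linarith, ?_, ?_⟩
    · rw [neg_smul, ← sub_eq_add_neg]; exact hpb
    · rw [neg_smul, sub_neg_eq_add]; exact hpa
  · exact ⟨a, b, c / 2, haF, hbF, rfl, hab, by linarith, hpa, hpb⟩

end Median

theorem stmt18_general (n : ℕ) (B : Set (EuclideanSpace ℝ (Fin (n + 1))))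
    (v : Fin (n + 1) → EuclideanSpace ℝ (Fin (n + 1)))
    (x : EuclideanSpace ℝ (Fin (n + 1)))
    (hx : x ∈ ⋂ i : Fin (n + 1), median B (v i)) (hxint : x ∈ interior B) :
    ∃ xp xm : Fin (n + 1) → EuclideanSpace ℝ (Fin (n + 1)), ∃ lam : Fin (n + 1) → ℝ,
      ∀ i : Fin (n + 1),
        xp i ∈ frontier B ∧ xm i ∈ frontier B ∧
        x = midpoint ℝ (xp i) (xm i) ∧ pv (v i) (xp i) = pv (v i) (xm i) ∧
        0 < lam i ∧ xp i = x + lam i • v i ∧ xm i = x - lam i • v i := by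
  choose xp xm lam h using fun i => exists_symmetric_pair_of_mem_median (mem_iInter.mp hx i) hxint
  exact ⟨xp, xm, lam, h⟩

/-- If `B` is regular and has no special corners with respect to an orthonormal basis
`v₁, …, v_{n+1}`, and `x` lies in all the medians `M_i` and in the interior of `B`, then
there are points `x_i^± ∈ ∂B` with `x` their midpoint, `p_i(x_i^+) = p_i(x_i^-)`, and
`x_i^± = x ± λ_i • v_i` with `λ_i > 0`: the vertices of an inscribed `(n+1)`-rhomb with
direction `{v₁, …, v_{n+1}}`. -/
theorem stmt18 (n : ℕ) (B : Set (EuclideanSpace ℝ (Fin (n + 1))))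
    (hBc : IsCompact B) (hBsc : StrictlyConvexSet B) (hBint : (interior B).Nonempty)
    (v : Fin (n + 1) → EuclideanSpace ℝ (Fin (n + 1))) (hv : Orthonormal ℝ v)
    (hreg : ∀ I : Finset (Fin (n + 1)), ∀ x ∈ B,
      (∀ i ∈ I, pv (v i) x ∈ frontier (pv (v i) '' B)) →
        Submodule.orthogonalProjectionOnto (Submodule.span ℝ (v '' ↑I))ᗮ x ∈
          frontier ((Submodule.orthogonalProjectionOnto (Submodule.span ℝ (v '' ↑I))ᗮ :
            EuclideanSpace ℝ (Fin (n + 1)) → _) '' B))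
    (hnsc : ¬ ∃ x ∈ B, ∀ i : Fin (n + 1), pv (v i) x ∈ frontier (pv (v i) '' B))
    (x : EuclideanSpace ℝ (Fin (n + 1)))
    (hx : x ∈ ⋂ i : Fin (n + 1), median B (v i)) (hxint : x ∈ interior B) :
    ∃ xp xm : Fin (n + 1) → EuclideanSpace ℝ (Fin (n + 1)), ∃ lam : Fin (n + 1) → ℝ,
      ∀ i : Fin (n + 1),
        xp i ∈ frontier B ∧ xm i ∈ frontier B ∧
        x = midpoint ℝ (xp i) (xm i) ∧ pv (v i) (xp i) = pv (v i) (xm i) ∧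
        0 < lam i ∧ xp i = x + lam i • v i ∧ xm i = x - lam i • v i :=
  stmt18_general n B v x hx hxint
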